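/- Annotation-free bidirectionally typable terms are β-normal: for every typing context Γ, term e, and simple type A, if e is annotation-free and either Γ ⊢ e ⇒ A or Γ ⊢ e ⇐ A is derivable in the bidirectional system, then e is β-normal. -/
import Mathlib


/-- Simple types: `unit` and function types. -/
inductive Ty : Type
  | unit : Ty
  | arr : Ty → Ty → Ty
deriving DecidableEq

/-- Terms (de Bruijn indices): variables, λ-abstraction, application,
    the unit term `()`, and type annotations `(e : A)`. -/
inductive Tm : Type
  | var : Nat → Tm
  | lam : Tm → Tm
  | app : Tm → Tm → Tm
  | unit : Tm
  | anno : Tm → Ty → Tm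
deriving DecidableEq

/-- Type assignment system `Γ ⊢ e : A`.  Contexts are lists of types,
    indexed by de Bruijn variables. -/
inductive Assign : List Ty → Tm → Ty → Prop
  | var {Γ : List Ty} {n : Nat} {A : Ty} :
      Γ[n]? = some A → Assign Γ (.var n) A
  | anno {Γ e A} :
      Assign Γ e A → Assign Γ (.anno e A) A
  | unit {Γ} : Assign Γ .unit .unit
  | lam {Γ e A₁ A₂} :
      Assign (A₁ :: Γ) e A₂ → Assign Γ (.lam e) (.arr A₁ A₂)
  | app {Γ e₁ e₂ A B} :
      Assign Γ e₁ (.arr A B) → Assign Γ e₂ A → Assign Γ (.app e₁ e₂) B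

mutual
  /-- Synthesis judgment `Γ ⊢ e ⇒ A`. -/
  inductive Syn : List Ty → Tm → Ty → Prop
    | var {Γ : List Ty} {n : Nat} {A : Ty} :
        Γ[n]? = some A → Syn Γ (.var n) A
    | anno {Γ e A} :
        Chk Γ e A → Syn Γ (.anno e A) A
    | app {Γ e₁ e₂ A B} :
        Syn Γ e₁ (.arr A B) → Chk Γ e₂ A → Syn Γ (.app e₁ e₂) B

  /-- Checking judgment `Γ ⊢ e ⇐ A`. -/
  inductive Chk : List Ty → Tm → Ty → Prop
    | sub {Γ e A B} :
        Syn Γ e A → A = B → Chk Γ e B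
    | unit {Γ} : Chk Γ .unit .unit
    | lam {Γ e A₁ A₂} :
        Chk (A₁ :: Γ) e A₂ → Chk Γ (.lam e) (.arr A₁ A₂)
end

/-- `e` is annotation-free: it contains no subterm of the form `(e' : A)`. -/
def AnnoFree : Tm → Prop
  | .var _ => True
  | .lam e => AnnoFree e
  | .app e₁ e₂ => AnnoFree e₁ ∧ AnnoFree e₂
  | .unit => True
  | .anno _ _ => False

/-- `e` is β-normal: it contains no subterm of the form `(λx.e₁) e₂`. -/
def BetaNormal : Tm → Prop
  | .var _ => True
  | .lam e => BetaNormal e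
  | .app e₁ e₂ => (∀ e' : Tm, e₁ ≠ .lam e') ∧ BetaNormal e₁ ∧ BetaNormal e₂
  | .unit => True
  | .anno e _ => BetaNormal e

lemma syn_not_lam {Γ e' A} (h : Syn Γ (.lam e') A) : False := by
  cases h

lemma aux_bn : ∀ e Γ A, AnnoFree e → (Syn Γ e A ∨ Chk Γ e A) → BetaNormal e := by
  intro e
  induction e with
  | var n => intro _ _ _ _; trivial
  | unit => intro _ _ _ _; trivial
  | anno e A ih => intro _ _ hf _; exact hf.elim
  | lam e ih =>
    intro Γ A hf h
    rcases h with h | h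
    · exact (syn_not_lam h).elim
    · cases h with
      | sub hs _ => exact (syn_not_lam hs).elim
      | lam hc => exact ih _ _ hf (Or.inr hc)
  | app e₁ e₂ ih₁ ih₂ =>
    intro Γ A hf h
    have h' : ∃ A' B, Syn Γ e₁ (.arr A' B) ∧ Chk Γ e₂ A' := by
      rcases h with h | h
      · cases h with | app hs hc => exact ⟨_, _, hs, hc⟩
      · cases h with
        | sub hs _ => cases hs with | app hs hc => exact ⟨_, _, hs, hc⟩
    obtain ⟨A', B, hs, hc⟩ := h'
    refine ⟨?_, ih₁ _ _ hf.1 (Or.inl hs), ih₂ _ _ hf.2 (Or.inr hc)⟩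
    intro e' he
    subst he
    exact syn_not_lam hs

/-- Annotation-free bidirectionally typable terms are β-normal. -/
theorem annofree_typable_beta_normal (Γ : List Ty) (e : Tm) (A : Ty)
    (hfree : AnnoFree e) (h : Syn Γ e A ∨ Chk Γ e A) : BetaNormal e :=
  aux_bn e Γ A hfree h
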